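/- Suppose 1 < γ ≤ 2, let s(t) be a survival function with c₀ = (∫₀^∞ e^{-rt}s(t)dt)^{-1} finite, r > 0, and define the indifference loading δ by (1-δ)^{1-γ} c₀^{-γ} = (∫₀^∞ e^{-rt} β_{n,γ}(s(t))^{1/γ} dt)^γ. Then δ < (1/n)(c₀/r - 1). -/

import Mathlib

open Finset MeasureTheory Set

/-
Jensen's inequality for the concave map `x ↦ x ^ (γ - 1)` (as `0 < γ - 1 ≤ 1`) bounds `θ_{n,γ}(p)`
by `(E[N(p)] / n) ^ (γ - 1) = ((1 + (n - 1) p) / n) ^ (γ - 1)`, and weighted AM-GM with weights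
`1/γ`, `(γ-1)/γ` turns this into `β_{n,γ}(p) ^ (1/γ) ≤ p + (γ - 1)/(γ n) · (1 - p)`.
Discounting and integrating gives `x := c₀ ∫ e^{-rt} β^{1/γ} ≤ 1 + b` with
`b = (γ - 1)/(γ n) · (c₀/r - 1)`, and `b > 0` because `s < 1` forces `c₀/r > 1`.
With `P = γ/(γ-1) ≥ 1`, Bernoulli's inequality for `(1/x) ^ P` gives
`δ = 1 - x ^ (-P) ≤ P (1 - 1/x) ≤ P · b/(1 + b) < P b = (c₀/r - 1)/n`.
-/

/-- θ_{n,γ}(p) = E[(N(p)/n)^{γ-1}] where N(p) - 1 ~ Bin(n-1, p). -/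
noncomputable def theta (n : ℕ) (γ p : ℝ) : ℝ :=
  ∑ k ∈ Finset.range n,
    ((n - 1).choose k : ℝ) * p ^ k * (1 - p) ^ (n - 1 - k) * ((n : ℝ) / (k + 1)) ^ (1 - γ)

/-- β_{n,γ}(p) = p · θ_{n,γ}(p). -/
noncomputable def beta (n : ℕ) (γ p : ℝ) : ℝ := p * theta n γ p

section Binomial

variable (m : ℕ)

lemma sum_eval_bernsteinPolynomial (p : ℝ) :
    ∑ k ∈ range (m + 1), (bernsteinPolynomial ℝ m k).eval p = 1 := by
  simpa [Polynomial.eval_finsetSum] using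
    congrArg (Polynomial.eval p) (bernsteinPolynomial.sum ℝ m)

lemma sum_mul_eval_bernsteinPolynomial (p : ℝ) :
    ∑ k ∈ range (m + 1), (k : ℝ) * (bernsteinPolynomial ℝ m k).eval p = m * p := by
  simpa [Polynomial.eval_finsetSum, nsmul_eq_mul] using
    congrArg (Polynomial.eval p) (bernsteinPolynomial.sum_smul ℝ m)

lemma eval_bernsteinPolynomial_nonneg (k : ℕ) {p : ℝ} (hp0 : 0 ≤ p) (hp1 : p ≤ 1) :
    0 ≤ (bernsteinPolynomial ℝ m k).eval p := by
  have : 0 ≤ 1 - p := by linarith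
  simp only [bernsteinPolynomial, Polynomial.eval_mul, Polynomial.eval_pow, Polynomial.eval_sub,
    Polynomial.eval_one, Polynomial.eval_X, Polynomial.eval_natCast]
  positivity

end Binomial

lemma theta_succ (m : ℕ) (γ p : ℝ) :
    theta (m + 1) γ p =
      ∑ k ∈ range (m + 1), (bernsteinPolynomial ℝ m k).eval p * ((k + 1) / (m + 1)) ^ (γ - 1) := by
  refine sum_congr rfl fun k _ => ?_
  rw [show 1 - γ = -(γ - 1) by ring, Real.rpow_neg (by positivity), ← Real.inv_rpow (by positivity)]
  simp [bernsteinPolynomial, inv_div]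

lemma theta_nonneg {n : ℕ} {γ p : ℝ} (hp0 : 0 ≤ p) (hp1 : p ≤ 1) : 0 ≤ theta n γ p := by
  have : 0 ≤ 1 - p := by linarith
  unfold theta
  positivity

lemma theta_le_rpow_mean {n : ℕ} (hn : 0 < n) {γ p : ℝ} (hγ1 : 1 ≤ γ) (hγ2 : γ ≤ 2)
    (hp0 : 0 ≤ p) (hp1 : p ≤ 1) :
    theta n γ p ≤ ((1 + (n - 1) * p) / n) ^ (γ - 1) := by
  obtain ⟨m, rfl⟩ := Nat.exists_eq_add_one.mpr hn
  have hmean : ∑ k ∈ range (m + 1),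
      (bernsteinPolynomial ℝ m k).eval p * (((k : ℝ) + 1) / (m + 1)) = (1 + m * p) / (m + 1) := by
    calc ∑ k ∈ range (m + 1), (bernsteinPolynomial ℝ m k).eval p * (((k : ℝ) + 1) / (m + 1))
        = (∑ k ∈ range (m + 1), (k : ℝ) * (bernsteinPolynomial ℝ m k).eval p
            + ∑ k ∈ range (m + 1), (bernsteinPolynomial ℝ m k).eval p) / (m + 1) := by
          rw [← sum_add_distrib, sum_div]
          exact sum_congr rfl fun k _ => by ring
      _ = (1 + m * p) / (m + 1) := by
          rw [sum_mul_eval_bernsteinPolynomial, sum_eval_bernsteinPolynomial, add_comm]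
  have hjensen := (Real.concaveOn_rpow (by linarith) (by linarith : γ - 1 ≤ 1)).le_map_sum
    (fun k _ => eval_bernsteinPolynomial_nonneg m k hp0 hp1) (sum_eval_bernsteinPolynomial m p)
    (fun k _ => show (0 : ℝ) ≤ ((k : ℝ) + 1) / (m + 1) by positivity)
  simp only [smul_eq_mul, hmean] at hjensen
  rw [theta_succ]
  push_cast
  simpa [add_comm] using hjensen

lemma beta_rpow_inv_le {n : ℕ} (hn : 0 < n) {γ p : ℝ} (hγ1 : 1 ≤ γ) (hγ2 : γ ≤ 2)
    (hp0 : 0 ≤ p) (hp1 : p ≤ 1) :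
    beta n γ p ^ (1 / γ) ≤ p + (γ - 1) / (γ * n) * (1 - p) := by
  set q : ℝ := (1 + (n - 1) * p) / n
  have hq0 : 0 ≤ q := by
    have : (1 : ℝ) ≤ n := by exact_mod_cast hn
    positivity
  have hγ0 : 0 < γ := by linarith
  have hamgm := Real.geom_mean_le_arith_mean2_weighted (w₁ := 1 / γ) (w₂ := (γ - 1) / γ)
    (by positivity) (div_nonneg (by linarith) hγ0.le) hp0 hq0 (by field_simp; ring)
  calc beta n γ p ^ (1 / γ) ≤ (p * q ^ (γ - 1)) ^ (1 / γ) :=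
        Real.rpow_le_rpow (mul_nonneg hp0 (theta_nonneg hp0 hp1))
          (mul_le_mul_of_nonneg_left (theta_le_rpow_mean hn hγ1 hγ2 hp0 hp1) hp0) (by positivity)
    _ = p ^ (1 / γ) * q ^ ((γ - 1) / γ) := by
        rw [Real.mul_rpow hp0 (by positivity), ← Real.rpow_mul hq0, mul_one_div]
    _ ≤ 1 / γ * p + (γ - 1) / γ * q := hamgm
    _ = p + (γ - 1) / (γ * n) * (1 - p) := by simp only [q]; field_simp; ring

section Discounting

variable {r : ℝ} {s : ℝ → ℝ}

lemma integral_exp_neg_mul_Ioi_zero (hr : 0 < r) : ∫ t in Ioi (0 : ℝ), Real.exp (-r * t) = r⁻¹ := by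
  rw [integral_exp_mul_Ioi (neg_lt_zero.mpr hr)]
  simp

lemma setIntegral_pos_of_forall_pos {X : Type*} [MeasurableSpace X] {μ : Measure X} {A : Set X}
    {f : X → ℝ} (hA : MeasurableSet A) (hμA : μ A ≠ 0) (hf : IntegrableOn f A μ)
    (hpos : ∀ x ∈ A, 0 < f x) : 0 < ∫ x in A, f x ∂μ := by
  rw [setIntegral_pos_iff_support_of_nonneg_ae ((ae_restrict_iff' hA).mpr
    (Filter.Eventually.of_forall fun x hx => (hpos x hx).le)) hf]
  have hsupp : Function.support f ∩ A = A := inter_eq_right.mpr fun x hx => (hpos x hx).ne'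
  rwa [hsupp, pos_iff_ne_zero]

lemma integral_exp_neg_mul_mul_lt (hr : 0 < r)
    (hint : IntegrableOn (fun t => Real.exp (-r * t) * s t) (Ioi 0))
    (hs : ∀ t : ℝ, 0 < t → s t < 1) :
    ∫ t in Ioi (0 : ℝ), Real.exp (-r * t) * s t < r⁻¹ := by
  have hexp := exp_neg_integrableOn_Ioi 0 hr
  have hgap : 0 < ∫ t in Ioi (0 : ℝ), (Real.exp (-r * t) - Real.exp (-r * t) * s t) :=
    setIntegral_pos_of_forall_pos measurableSet_Ioi (by simp) (hexp.sub hint) fun t ht => by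
      have := hs t ht
      nlinarith [Real.exp_pos (-r * t)]
  rw [integral_sub hexp hint, integral_exp_neg_mul_Ioi_zero hr] at hgap
  linarith

lemma integral_exp_neg_mul_mul_beta_rpow_inv_le {n : ℕ} (hn : 0 < n) {γ : ℝ} (hγ1 : 1 ≤ γ)
    (hγ2 : γ ≤ 2) (hr : 0 < r) (hs : ∀ t : ℝ, 0 < t → 0 ≤ s t ∧ s t ≤ 1)
    (hint : IntegrableOn (fun t => Real.exp (-r * t) * s t) (Ioi 0))
    (hintβ : IntegrableOn (fun t => Real.exp (-r * t) * beta n γ (s t) ^ (1 / γ)) (Ioi 0)) :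
    ∫ t in Ioi (0 : ℝ), Real.exp (-r * t) * beta n γ (s t) ^ (1 / γ) ≤
      (1 - (γ - 1) / (γ * n)) * (∫ t in Ioi (0 : ℝ), Real.exp (-r * t) * s t)
        + (γ - 1) / (γ * n) * r⁻¹ := by
  set c := (γ - 1) / (γ * n)
  have hexp := exp_neg_integrableOn_Ioi 0 hr
  rw [← integral_exp_neg_mul_Ioi_zero hr, ← integral_const_mul, ← integral_const_mul,
    ← integral_add (hint.const_mul _) (hexp.const_mul _)]
  refine setIntegral_mono_on hintβ ((hint.const_mul _).add (hexp.const_mul _)) measurableSet_Ioi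
    fun t ht => ?_
  calc Real.exp (-r * t) * beta n γ (s t) ^ (1 / γ)
      ≤ Real.exp (-r * t) * (s t + c * (1 - s t)) :=
        mul_le_mul_of_nonneg_left (beta_rpow_inv_le hn hγ1 hγ2 (hs t ht).1 (hs t ht).2)
          (Real.exp_pos _).le
    _ = (1 - c) * (Real.exp (-r * t) * s t) + c * Real.exp (-r * t) := by ring

end Discounting

lemma one_sub_rpow_neg_lt {x b P : ℝ} (hx : 0 < x) (hxb : x ≤ 1 + b) (hb : 0 < b) (hP : 1 ≤ P) :
    1 - x ^ (-P) < P * b := by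
  have hbernoulli : 1 + P * (x⁻¹ - 1) ≤ x ^ (-P) := by
    rw [Real.rpow_neg hx.le, ← Real.inv_rpow hx.le]
    simpa using one_add_mul_self_le_rpow_one_add (s := x⁻¹ - 1) (by linarith [inv_pos.mpr hx]) hP
  calc 1 - x ^ (-P) ≤ P * (1 - x⁻¹) := by linarith
    _ ≤ P * (1 - (1 + b)⁻¹) := by gcongr
    _ = P * (b / (1 + b)) := by field_simp; ring
    _ < P * b := mul_lt_mul_of_pos_left (div_lt_self hb (by linarith)) (by linarith)

theorem indifference_loading_bound_general
    (n : ℕ) (hn : 1 ≤ n) (γ r : ℝ) (hγ1 : 1 < γ) (hγ2 : γ ≤ 2) (hr : 0 < r)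
    (s : ℝ → ℝ)
    (hs : ∀ t : ℝ, 0 < t → 0 < s t ∧ s t < 1)
    (hint : IntegrableOn (fun t => Real.exp (-r * t) * s t) (Ioi 0))
    (hIpos : 0 < ∫ t in Ioi (0 : ℝ), Real.exp (-r * t) * s t)
    (hintOT : IntegrableOn (fun t => Real.exp (-r * t) * (beta n γ (s t)) ^ (1 / γ)) (Ioi 0))
    (hJpos : 0 < ∫ t in Ioi (0 : ℝ), Real.exp (-r * t) * (beta n γ (s t)) ^ (1 / γ))
    (c₀ δ : ℝ) (hc₀ : c₀ = (∫ t in Ioi (0 : ℝ), Real.exp (-r * t) * s t)⁻¹)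
    (hδ : δ = 1 - (c₀ * ∫ t in Ioi (0 : ℝ),
        Real.exp (-r * t) * (beta n γ (s t)) ^ (1 / γ)) ^ (γ / (1 - γ))) :
    δ < (1 / n) * (c₀ / r - 1) := by
  set I := ∫ t in Ioi (0 : ℝ), Real.exp (-r * t) * s t
  set J := ∫ t in Ioi (0 : ℝ), Real.exp (-r * t) * beta n γ (s t) ^ (1 / γ)
  set c := (γ - 1) / (γ * n)
  have hc₀pos : 0 < c₀ := hc₀ ▸ inv_pos.mpr hIpos
  have hc₀I : c₀ * I = 1 := hc₀ ▸ inv_mul_cancel₀ hIpos.ne'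
  have hIr : I < r⁻¹ := integral_exp_neg_mul_mul_lt hr hint fun t ht => (hs t ht).2
  have hJ : J ≤ (1 - c) * I + c * r⁻¹ := integral_exp_neg_mul_mul_beta_rpow_inv_le hn hγ1.le hγ2
    hr (fun t ht => ⟨(hs t ht).1.le, (hs t ht).2.le⟩) hint hintOT
  have ha : 0 < c₀ / r - 1 := sub_pos.mpr <| calc
    1 = c₀ * I := hc₀I.symm
    _ < c₀ * r⁻¹ := mul_lt_mul_of_pos_left hIr hc₀pos
    _ = c₀ / r := (div_eq_mul_inv _ _).symm
  have hx : c₀ * J ≤ 1 + c * (c₀ / r - 1) := calc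
    c₀ * J ≤ c₀ * ((1 - c) * I + c * r⁻¹) := mul_le_mul_of_nonneg_left hJ hc₀pos.le
    _ = (1 - c) * (c₀ * I) + c * (c₀ / r) := by ring
    _ = 1 + c * (c₀ / r - 1) := by rw [hc₀I]; ring
  have hγ0 : γ - 1 ≠ 0 := by linarith
  rw [hδ, show γ / (1 - γ) = -(γ / (γ - 1)) by rw [← div_neg, neg_sub]]
  calc 1 - (c₀ * J) ^ (-(γ / (γ - 1))) < γ / (γ - 1) * (c * (c₀ / r - 1)) :=
        one_sub_rpow_neg_lt (mul_pos hc₀pos hJpos) hx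
          (mul_pos (div_pos (by linarith) (by positivity)) ha)
          ((one_le_div (by linarith)).mpr (by linarith))
    _ = 1 / n * (c₀ / r - 1) := by simp only [c]; field_simp

theorem indifference_loading_bound
    (n : ℕ) (hn : 1 ≤ n) (γ r : ℝ) (hγ1 : 1 < γ) (hγ2 : γ ≤ 2) (hr : 0 < r)
    (s : ℝ → ℝ) (hmeas : Measurable s)
    (hs : ∀ t : ℝ, 0 < t → 0 < s t ∧ s t < 1)
    (hint : IntegrableOn (fun t => Real.exp (-r * t) * s t) (Ioi 0))
    (hIpos : 0 < ∫ t in Ioi (0 : ℝ), Real.exp (-r * t) * s t)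
    (hintOT : IntegrableOn (fun t => Real.exp (-r * t) * (beta n γ (s t)) ^ (1 / γ)) (Ioi 0))
    (hJpos : 0 < ∫ t in Ioi (0 : ℝ), Real.exp (-r * t) * (beta n γ (s t)) ^ (1 / γ))
    (c₀ δ : ℝ) (hc₀ : c₀ = (∫ t in Ioi (0 : ℝ), Real.exp (-r * t) * s t)⁻¹)
    (hδ : δ = 1 - (c₀ * ∫ t in Ioi (0 : ℝ),
        Real.exp (-r * t) * (beta n γ (s t)) ^ (1 / γ)) ^ (γ / (1 - γ))) :
    δ < (1 / n) * (c₀ / r - 1) :=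
  indifference_loading_bound_general n hn γ r hγ1 hγ2 hr s hs hint hIpos hintOT hJpos c₀ δ hc₀ hδ
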